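/- arXiv:2206.03634 — 2 statements merged into one kernel-verified Lean document; each statement's English description precedes it below -/
import Mathlib

section
/- Let (α_{ij}) be a real symmetric 3×3 matrix with det A ≠ 0, and let T_{ijkl} satisfy T_{ijkl} = −T_{jikl} = −T_{ijlk} = T_{klij}. Define γ_{ij} = (1/(2 det A)) · Σ_{k,l,m,p,q,r=1}^{3} ε_{klm} ε_{pqr} ( α_{kp} α_{lq} T_{mirj} − (1/4) α_{ij} α_{kp} T_{lmqr} ), where ε is the Levi-Civita symbol. Then γ is symmetric and satisfies γ_{ik}α_{jl} + α_{ik}γ_{jl} − γ_{il}α_{jk} − α_{il}γ_{jk} = T_{ijkl} for all i,j,k,l ∈ {1,2,3}. -/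
open Matrix

/-- The Levi-Civita symbol on three indices, with `ε 0 1 2 = 1`. -/
def eps (i j k : Fin 3) : ℝ :=
  if (i, j, k) = (0, 1, 2) ∨ (i, j, k) = (1, 2, 0) ∨ (i, j, k) = (2, 0, 1) then 1
  else if (i, j, k) = (0, 2, 1) ∨ (i, j, k) = (2, 1, 0) ∨ (i, j, k) = (1, 0, 2) then -1
  else 0

/-!
In dimension three a tensor antisymmetric in both pairs of indices is determined by its Hodge dual
`S m r = T (m+1) (m+2) (r+1) (r+2)`, through `T i j k l = ∑ a b, ε i j a * ε k l b * S a b`, and `S`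
is symmetric when `T` is symmetric under exchange of the pairs; so it suffices to compare duals.
Write `Φ X Y` for the dual of the Kulkarni–Nomizu product `X ⊙ Y`, a polarised cofactor matrix
(`Φ α α` is twice the cofactor matrix of `α`). Substituting `T = ε ε S`, the Levi-Civita sums
defining `γ` collapse to `γ = (2 det α)⁻¹ (Φ (Φ α α) S - ⟨α, S⟩ α)`, and the equation `Φ γ α = S`
becomes the polynomial identity `Φ (Φ (Φ α α) S) α = 2 det α • S + ⟨α, S⟩ • Φ α α` between
`3 × 3` matrices.
-/

def kulkarniNomizu {n R : Type*} [CommRing R] (g h : Matrix n n R) (i j k l : n) : R :=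
  g i k * h j l + h i k * g j l - g i l * h j k - h i l * g j k

def hodgeDual {R : Type*} (T : Fin 3 → Fin 3 → Fin 3 → Fin 3 → R) : Matrix (Fin 3) (Fin 3) R :=
  of fun m r => T (m + 1) (m + 2) (r + 1) (r + 2)

section KulkarniNomizu

variable {n R : Type*} [CommRing R] (g h : Matrix n n R)

theorem kulkarniNomizu_swap_left (i j k l : n) :
    kulkarniNomizu g h i j k l = -kulkarniNomizu g h j i k l := by
  unfold kulkarniNomizu; ring

theorem kulkarniNomizu_swap_right (i j k l : n) :
    kulkarniNomizu g h i j k l = -kulkarniNomizu g h i j l k := by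
  unfold kulkarniNomizu; ring

variable {g h}

theorem kulkarniNomizu_swap_pairs (hg : g.IsSymm) (hh : h.IsSymm) (i j k l : n) :
    kulkarniNomizu g h i j k l = kulkarniNomizu g h k l i j := by
  unfold kulkarniNomizu
  rw [hg.apply k i, hg.apply l j, hg.apply k j, hg.apply l i,
    hh.apply k i, hh.apply l j, hh.apply k j, hh.apply l i]
  ring

end KulkarniNomizu

theorem hodgeDual_isSymm {R : Type*} {T : Fin 3 → Fin 3 → Fin 3 → Fin 3 → R}
    (hT : ∀ i j k l, T i j k l = T k l i j) : (hodgeDual T).IsSymm :=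
  IsSymm.ext fun _ _ => hT _ _ _ _

theorem hodgeDual_kulkarniNomizu_isSymm {R : Type*} [CommRing R] {g h : Matrix (Fin 3) (Fin 3) R}
    (hg : g.IsSymm) (hh : h.IsSymm) : (hodgeDual (kulkarniNomizu g h)).IsSymm :=
  hodgeDual_isSymm (kulkarniNomizu_swap_pairs hg hh)

theorem eq_sum_eps_mul_of_antisymm (f : Fin 3 → Fin 3 → ℝ) (hf : ∀ i j, f i j = -f j i)
    (i j : Fin 3) : f i j = ∑ m, eps i j m * f (m + 1) (m + 2) := by
  have hdiag : ∀ i, f i i = 0 := fun i => by linarith [hf i i]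
  fin_cases i <;> fin_cases j <;> simp [eps, hdiag] <;>
    linarith [hf 0 1, hf 0 2, hf 1 2]

section Antisymmetric

variable {T : Fin 3 → Fin 3 → Fin 3 → Fin 3 → ℝ}
  (hT1 : ∀ i j k l, T i j k l = -T j i k l) (hT2 : ∀ i j k l, T i j k l = -T i j l k)
include hT1 hT2

theorem eq_sum_eps_eps_hodgeDual (i j k l : Fin 3) :
    T i j k l = ∑ a, ∑ b, eps i j a * eps k l b * hodgeDual T a b := by
  rw [eq_sum_eps_mul_of_antisymm (T · · k l) (hT1 · · k l) i j]
  refine Finset.sum_congr rfl fun a _ => ?_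
  rw [eq_sum_eps_mul_of_antisymm (T (a + 1) (a + 2)) (hT2 _ _) k l, Finset.mul_sum]
  refine Finset.sum_congr rfl fun b _ => ?_
  simp only [hodgeDual, of_apply]
  ring

theorem eq_of_hodgeDual_eq {T' : Fin 3 → Fin 3 → Fin 3 → Fin 3 → ℝ}
    (hT1' : ∀ i j k l, T' i j k l = -T' j i k l) (hT2' : ∀ i j k l, T' i j k l = -T' i j l k)
    (h : hodgeDual T = hodgeDual T') : T = T' := by
  funext i j k l
  rw [eq_sum_eps_eps_hodgeDual hT1 hT2, eq_sum_eps_eps_hodgeDual hT1' hT2', h]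

end Antisymmetric

set_option maxHeartbeats 1000000 in
theorem sum_eps_eps_mul_sub_mul (A S : Matrix (Fin 3) (Fin 3) ℝ) (i j : Fin 3) :
    ∑ k, ∑ l, ∑ m, ∑ p, ∑ q, ∑ r, eps k l m * eps p q r *
        (A k p * A l q * (∑ a, ∑ b, eps m i a * eps r j b * S a b) -
          (1 / 4) * A i j * A k p * ∑ a, ∑ b, eps l m a * eps q r b * S a b) =
      hodgeDual (kulkarniNomizu (hodgeDual (kulkarniNomizu A A)) S) i j -
        (∑ k, ∑ p, A k p * S k p) * A i j := by
  fin_cases i <;> fin_cases j <;>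
    simp [Fin.sum_univ_three, eps, hodgeDual, kulkarniNomizu] <;> ring

noncomputable def gaussSolution (A S : Matrix (Fin 3) (Fin 3) ℝ) : Matrix (Fin 3) (Fin 3) ℝ :=
  (2 * A.det)⁻¹ • (hodgeDual (kulkarniNomizu (hodgeDual (kulkarniNomizu A A)) S) -
    (∑ k, ∑ p, A k p * S k p) • A)

theorem gaussSolution_isSymm {A S : Matrix (Fin 3) (Fin 3) ℝ} (hA : A.IsSymm) (hS : S.IsSymm) :
    (gaussSolution A S).IsSymm :=
  ((hodgeDual_kulkarniNomizu_isSymm (hodgeDual_kulkarniNomizu_isSymm hA hA) hS).sub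
    (hA.smul _)).smul _

set_option maxHeartbeats 1000000 in
theorem hodgeDual_kulkarniNomizu_cofactor (A S : Matrix (Fin 3) (Fin 3) ℝ) :
    hodgeDual (kulkarniNomizu (hodgeDual (kulkarniNomizu (hodgeDual (kulkarniNomizu A A)) S)) A) =
      (2 * A.det) • S + (∑ k, ∑ p, A k p * S k p) • hodgeDual (kulkarniNomizu A A) := by
  ext m r
  fin_cases m <;> fin_cases r <;>
    simp [Fin.sum_univ_three, hodgeDual, kulkarniNomizu, det_fin_three] <;> ring

theorem hodgeDual_kulkarniNomizu_gaussSolution {A : Matrix (Fin 3) (Fin 3) ℝ} (hdet : A.det ≠ 0)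
    (S : Matrix (Fin 3) (Fin 3) ℝ) : hodgeDual (kulkarniNomizu (gaussSolution A S) A) = S := by
  have h := hodgeDual_kulkarniNomizu_cofactor A S
  unfold gaussSolution
  -- keeps `simp` from unfolding the inner duals
  set D := hodgeDual (kulkarniNomizu (hodgeDual (kulkarniNomizu A A)) S)
  ext m r
  have hmr := congrFun (congrFun h m) r
  simp only [hodgeDual, kulkarniNomizu, of_apply, Matrix.smul_apply, Matrix.sub_apply,
    Matrix.add_apply, smul_eq_mul] at hmr ⊢
  field_simp
  linear_combination hmr

theorem linearized_gauss_explicit_solution (A : Matrix (Fin 3) (Fin 3) ℝ)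
    (hA : A.IsSymm) (hdet : A.det ≠ 0)
    (T : Fin 3 → Fin 3 → Fin 3 → Fin 3 → ℝ)
    (hT1 : ∀ i j k l, T i j k l = -T j i k l)
    (hT2 : ∀ i j k l, T i j k l = -T i j l k)
    (hT3 : ∀ i j k l, T i j k l = T k l i j)
    (G : Matrix (Fin 3) (Fin 3) ℝ)
    (hG : ∀ i j, G i j = (1 / (2 * A.det)) *
      ∑ k : Fin 3, ∑ l : Fin 3, ∑ m : Fin 3, ∑ p : Fin 3, ∑ q : Fin 3, ∑ r : Fin 3,
        eps k l m * eps p q r *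
          (A k p * A l q * T m i r j - (1 / 4) * A i j * A k p * T l m q r)) :
    G.IsSymm ∧
      ∀ i j k l, G i k * A j l + A i k * G j l - G i l * A j k - A i l * G j k
        = T i j k l := by
  have hS : (hodgeDual T).IsSymm := hodgeDual_isSymm hT3
  obtain rfl : G = gaussSolution A (hodgeDual T) := by
    ext i j
    rw [hG, one_div]
    simp only [eq_sum_eps_eps_hodgeDual hT1 hT2 _ _ _ _, sum_eps_eps_mul_sub_mul,
      gaussSolution, Matrix.smul_apply, Matrix.sub_apply, smul_eq_mul]
  refine ⟨gaussSolution_isSymm hA hS, fun i j k l => ?_⟩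
  have hKN := eq_of_hodgeDual_eq (kulkarniNomizu_swap_left _ _) (kulkarniNomizu_swap_right _ _)
    hT1 hT2 (hodgeDual_kulkarniNomizu_gaussSolution hdet _)
  exact congrFun (congrFun (congrFun (congrFun hKN i) j) k) l
end

section
/- Let (α_{ij}) be a real symmetric 3×3 matrix, define R_{ijkl} = α_{ik}α_{jl} − α_{il}α_{jk}, and let S_{12121}, S_{12122}, S_{12131}, S_{12132}, S_{12231}, S_{12232} be arbitrary real numbers. Define r₁ = (R_{1213}R_{2323} − R_{1223}R_{1323})S_{12121} − (R_{1213}R_{1323} − R_{1223}R_{1313})S_{12122} − (R_{1212}R_{2323} − R_{1223}²)S_{12131} + (R_{1212}R_{1323} − R_{1213}R_{1223})S_{12132} + (R_{1212}R_{1323} − R_{1213}R_{1223})S_{12231} − (R_{1212}R_{1313} − R_{1213}²)S_{12232}, and h_{1212} = α_{11}S_{12232} − α_{12}S_{12132} − α_{12}S_{12231} + α_{13}S_{12122} + α_{22}S_{12131} − α_{23}S_{12121}. Then r₁ = −(det A)·h_{1212}. -/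
/-!
On the cyclic basis `e₂ ∧ e₃, e₃ ∧ e₁, e₁ ∧ e₂` of `Λ²ℝ³`, a curvature tensor of Gauss form
`R_{ijkl} = α_{ik} α_{jl} - α_{il} α_{jk}` is the transposed adjugate of `A = (α_{ij})`.
Each coefficient of `r₁` is a `2 × 2` minor of this matrix, i.e. an entry of its adjugate, and
Jacobi's identity `adj (adj A) = det A • A` turns these into `det A` times entries of `A`.
-/

open Matrix

variable {n α : Type*} [CommRing α]

def gaussCurvature (A : Matrix n n α) (i j k l : n) : α :=
  A i k * A j l - A i l * A j k

theorem gaussCurvature_swap_left (A : Matrix n n α) (i j k l : n) :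
    gaussCurvature A j i k l = -gaussCurvature A i j k l := by
  unfold gaussCurvature; ring

theorem gaussCurvature_swap_right (A : Matrix n n α) (i j k l : n) :
    gaussCurvature A i j l k = -gaussCurvature A i j k l := by
  unfold gaussCurvature; ring

theorem gaussCurvature_comm {A : Matrix n n α} (hA : A.IsSymm) (i j k l : n) :
    gaussCurvature A k l i j = gaussCurvature A i j k l := by
  simp only [gaussCurvature, hA.apply]; ring

def cyclicPair : Fin 3 → Fin 3 × Fin 3 := ![(1, 2), (2, 0), (0, 1)]

def curvatureMatrix (R : Fin 3 → Fin 3 → Fin 3 → Fin 3 → α) : Matrix (Fin 3) (Fin 3) α :=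
  of fun p q => R (cyclicPair p).1 (cyclicPair p).2 (cyclicPair q).1 (cyclicPair q).2

theorem curvatureMatrix_gaussCurvature (A : Matrix (Fin 3) (Fin 3) α) :
    curvatureMatrix (gaussCurvature A) = (adjugate A)ᵀ := by
  ext p q
  fin_cases p <;> fin_cases q <;>
    simp [curvatureMatrix, cyclicPair, gaussCurvature, adjugate_fin_three] <;> ring

theorem adjugate_curvatureMatrix_gaussCurvature (A : Matrix (Fin 3) (Fin 3) α) :
    adjugate (curvatureMatrix (gaussCurvature A)) = A.det • Aᵀ := by
  rw [curvatureMatrix_gaussCurvature, adjugate_transpose, adjugate_adjugate', det_transpose]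
  simp

theorem rivertz_r1_factorization (A : Matrix (Fin 3) (Fin 3) ℝ) (hA : A.IsSymm)
    (R : Fin 3 → Fin 3 → Fin 3 → Fin 3 → ℝ)
    (hR : ∀ i j k l, R i j k l = A i k * A j l - A i l * A j k)
    (S12121 S12122 S12131 S12132 S12231 S12232 : ℝ)
    (r1 h1212 : ℝ)
    (hr1 : r1 = (R 0 1 0 2 * R 1 2 1 2 - R 0 1 1 2 * R 0 2 1 2) * S12121
      - (R 0 1 0 2 * R 0 2 1 2 - R 0 1 1 2 * R 0 2 0 2) * S12122
      - (R 0 1 0 1 * R 1 2 1 2 - R 0 1 1 2 ^ 2) * S12131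
      + (R 0 1 0 1 * R 0 2 1 2 - R 0 1 0 2 * R 0 1 1 2) * S12132
      + (R 0 1 0 1 * R 0 2 1 2 - R 0 1 0 2 * R 0 1 1 2) * S12231
      - (R 0 1 0 1 * R 0 2 0 2 - R 0 1 0 2 ^ 2) * S12232)
    (hh : h1212 = A 0 0 * S12232 - A 0 1 * S12132 - A 0 1 * S12231
      + A 0 2 * S12122 + A 1 1 * S12131 - A 1 2 * S12121) :
    r1 = -(A.det) * h1212 := by
  obtain rfl : R = gaussCurvature A := by ext i j k l; exact hR i j k l
  have cof (i j : Fin 3) :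
      (curvatureMatrix (gaussCurvature A)).adjugate i j = A.det * A i j := by
    rw [adjugate_curvatureMatrix_gaussCurvature, hA.eq, Matrix.smul_apply, smul_eq_mul]
  have c00 := cof 0 0
  have c11 := cof 1 1
  have c01 := cof 0 1
  have c02 := cof 0 2
  have c12 := cof 1 2
  simp only [curvatureMatrix, cyclicPair, adjugate_fin_three, of_apply, cons_val_zero,
    cons_val_one, cons_val, cons_val', cons_val_fin_one, gaussCurvature_comm hA 0 1 2 0,
    gaussCurvature_comm hA 0 1 1 2, gaussCurvature_comm hA 2 0 1 2] at c00 c11 c01 c02 c12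
  -- `r₁` is written with the pair `(0, 2)`, whose cyclic counterpart is `(2, 0)`.
  rw [hr1, hh, gaussCurvature_swap_right A 0 1 2 0, gaussCurvature_swap_left A 2 0 1 2,
    gaussCurvature_swap_left A 2 0 0 2, gaussCurvature_swap_right A 2 0 2 0]
  linear_combination S12121 * c12 - S12122 * c02 - S12131 * c11 + (S12132 + S12231) * c01
    - S12232 * c00
end
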